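/- There is no lower bound for the map from A_c(T) to the space of o(n) sequences (hence it is not surjective): for every δ > 0 there exists F ∈ B_c(T), not identically zero, such that sup_{n∈ℤ} |f̂(n)|/(|n| + 1) < δ · ‖f‖_T, where f̂(n) = (−1)^n F(π) + i n ∫_{−π}^{π} F(t) e^{−int} dt and ‖f‖_T = sup{ |F(β) − F(α)| : α ≤ β ≤ α + 2π }. -/

import Mathlib

/-!
Average `K` sines whose frequencies are all `≡ 1 mod 4`:
`F x = K⁻¹ ∑_{j<K} sin ((4j+1) x)`. Every sine vanishes at `±π` and equals `1` at `π/2`,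
so `F ∈ B_c(𝕋)` with `F (π/2) - F (-π) = 1`, whence `‖f‖_𝕋 ≥ 1`. On the other hand
`∫ sin (N t) e^{-int} dt` vanishes unless `n = ±N`, and is `∓iπ` then, so each `f̂ n` sees
at most one frequency and `|f̂ n| ≤ |n| π / K`. Taking `K > π / δ` gives the theorem.
-/

open MeasureTheory Real

/-- Fourier coefficient of `f = F'` in terms of the primitive `F ∈ B_c(𝕋)`. -/
noncomputable def fourierCoefPrim (F : ℝ → ℂ) (n : ℤ) : ℂ :=
  (-1 : ℂ) ^ n * F π + Complex.I * (n : ℂ) *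
    ∫ t in (-π)..π, F t * Complex.exp (-Complex.I * (n : ℂ) * (t : ℂ))

/-- The Alexiewicz norm of `f = F'` expressed via the primitive. -/
noncomputable def alexNormPrim (F : ℝ → ℂ) : ℝ :=
  sSup {r : ℝ | ∃ α β : ℝ, α ≤ β ∧ β ≤ α + 2 * π ∧ r = ‖F β - F α‖}

open Complex in
theorem integral_exp_int_mul_I (m : ℤ) :
    ∫ t in (-π)..π, exp (I * m * t) = if m = 0 then 2 * π else 0 := by
  split_ifs with hm
  · simp [hm, two_mul]
  · have hc : I * m ≠ 0 := mul_ne_zero I_ne_zero (Int.cast_ne_zero.mpr hm)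
    have hperiod : exp (I * m * π) = exp (I * m * (-π)) := by
      rw [show I * m * π = I * m * (-π) + m * (2 * π * I) by ring, Complex.exp_add,
        exp_int_mul_two_pi_mul_I, mul_one]
    rw [integral_exp_mul_complex hc]
    push_cast
    rw [hperiod, sub_self, zero_div]

open Complex in
theorem integral_sin_mul_exp (N : ℕ) (n : ℤ) :
    ∫ t in (-π)..π, (Real.sin (N * t) : ℂ) * exp (-I * n * t) =
      I * π * ((if n = -N then 1 else 0) - if n = N then 1 else 0) := by
  have hsplit : ∀ t : ℝ, (Real.sin (N * t) : ℂ) * exp (-I * n * t) =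
      I / 2 * exp (I * ((-N - n : ℤ) : ℂ) * t) -
        I / 2 * exp (I * ((N - n : ℤ) : ℂ) * t) := by
    intro t
    have hneg : exp (I * ((-N - n : ℤ) : ℂ) * t) = exp (-(N * t) * I) * exp (-I * n * t) := by
      rw [← Complex.exp_add]; push_cast; ring_nf
    have hpos : exp (I * ((N - n : ℤ) : ℂ) * t) = exp (N * t * I) * exp (-I * n * t) := by
      rw [← Complex.exp_add]; push_cast; ring_nf
    rw [hneg, hpos, ofReal_sin, Complex.sin]
    push_cast
    ring
  simp only [hsplit]
  rw [intervalIntegral.integral_sub (by apply Continuous.intervalIntegrable; fun_prop)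
      (by apply Continuous.intervalIntegrable; fun_prop),
    intervalIntegral.integral_const_mul, intervalIntegral.integral_const_mul,
    integral_exp_int_mul_I, integral_exp_int_mul_I]
  split_ifs <;> first | omega | (push_cast; ring)

open Complex in
theorem norm_sum_integral_sin_mul_exp_le (s : Finset ℕ) (n : ℤ) :
    ‖∑ N ∈ s, ∫ t in (-π)..π, (Real.sin (N * t) : ℂ) * exp (-I * n * t)‖ ≤ π := by
  simp only [integral_sin_mul_exp]
  have hoff : ∀ N ∈ s, N ≠ n.natAbs →
      I * π * ((if n = -N then 1 else 0) - if n = N then 1 else 0) = 0 := by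
    intro N _ hN
    rw [if_neg (by omega), if_neg (by omega), sub_self, mul_zero]
  by_cases hn : n.natAbs ∈ s
  · rw [Finset.sum_eq_single_of_mem _ hn hoff]
    split_ifs <;> simp [abs_of_pos pi_pos, pi_pos.le]
  · rw [Finset.sum_eq_zero fun N hN => hoff N hN (ne_of_mem_of_not_mem hN hn), norm_zero]
    exact pi_pos.le

noncomputable def sinAverage (s : Finset ℕ) (x : ℝ) : ℝ :=
  (s.card : ℝ)⁻¹ * ∑ N ∈ s, Real.sin (N * x)

section sinAverage

variable (s : Finset ℕ)

@[fun_prop]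
theorem continuous_sinAverage : Continuous (sinAverage s) := by
  unfold sinAverage; fun_prop

theorem sinAverage_periodic : Function.Periodic (sinAverage s) (2 * π) := by
  intro x
  simp only [sinAverage, mul_add, Real.sin_add_nat_mul_two_pi]

theorem sinAverage_int_mul_pi (k : ℤ) : sinAverage s (k * π) = 0 := by
  simp only [sinAverage]
  rw [Finset.sum_eq_zero fun N _ => ?_, mul_zero]
  simpa [← mul_assoc] using Real.sin_int_mul_pi (N * k)

theorem abs_sinAverage_le_one (x : ℝ) : |sinAverage s x| ≤ 1 := by
  have hsum : |∑ N ∈ s, Real.sin (N * x)| ≤ s.card :=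
    (Finset.abs_sum_le_sum_abs _ _).trans <| by
      simpa using Finset.sum_le_card_nsmul s _ 1 fun N _ => Real.abs_sin_le_one _
  rw [sinAverage, abs_mul, abs_inv, Nat.abs_cast]
  exact inv_mul_le_one_of_le₀ hsum (Nat.cast_nonneg _)

theorem sinAverage_pi_div_two (hs : s.Nonempty) (hmod : ∀ N ∈ s, N % 4 = 1) :
    sinAverage s (π / 2) = 1 := by
  have hterm : ∀ N ∈ s, Real.sin (N * (π / 2)) = 1 := by
    intro N hN
    rw [← Nat.div_add_mod N 4, hmod N hN]
    push_cast
    rw [show (4 * (N / 4 : ℕ) + 1 : ℝ) * (π / 2) = π / 2 + (N / 4 : ℕ) * (2 * π) by ring,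
      Real.sin_add_nat_mul_two_pi, Real.sin_pi_div_two]
  rw [sinAverage, Finset.sum_congr rfl hterm, Finset.sum_const, nsmul_one,
    inv_mul_cancel₀ (Nat.cast_ne_zero.mpr hs.card_pos.ne')]

open Complex in
theorem norm_fourierCoefPrim_sinAverage_le (n : ℤ) :
    ‖fourierCoefPrim (fun x => (sinAverage s x : ℂ)) n‖ ≤ |(n : ℝ)| * (π / s.card) := by
  have hcoef : fourierCoefPrim (fun x => (sinAverage s x : ℂ)) n = I * n * ((s.card : ℂ)⁻¹ *
      ∑ N ∈ s, ∫ t in (-π)..π, (Real.sin (N * t) : ℂ) * exp (-I * n * t)) := by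
    have hπ : sinAverage s π = 0 := by simpa using sinAverage_int_mul_pi s 1
    have hexpand : ∀ t : ℝ, (sinAverage s t : ℂ) * exp (-I * n * t) =
        (s.card : ℂ)⁻¹ * ∑ N ∈ s, (Real.sin (N * t) : ℂ) * exp (-I * n * t) := by
      intro t
      push_cast [sinAverage]
      rw [mul_assoc, Finset.sum_mul]
    simp only [fourierCoefPrim, hπ, ofReal_zero, mul_zero, zero_add, hexpand]
    rw [intervalIntegral.integral_const_mul, intervalIntegral.integral_finsetSum fun N _ => by
      apply Continuous.intervalIntegrable; fun_prop]
  rw [hcoef, norm_mul, norm_mul, norm_mul, norm_I, one_mul, norm_inv, Complex.norm_natCast,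
    Complex.norm_intCast, div_eq_inv_mul]
  gcongr
  exact norm_sum_integral_sin_mul_exp_le s n

end sinAverage

theorem iSup_div_abs_add_one_le {u : ℤ → ℝ} {C : ℝ} (hC : 0 ≤ C)
    (hu : ∀ n, u n ≤ |(n : ℝ)| * C) :
    (⨆ n : ℤ, u n / (|(n : ℝ)| + 1)) ≤ C :=
  ciSup_le fun n => by
    rw [div_le_iff₀ (by positivity)]
    nlinarith [hu n, abs_nonneg (n : ℝ)]

theorem norm_sub_le_alexNormPrim {F : ℝ → ℂ} {M : ℝ} (hM : ∀ x, ‖F x‖ ≤ M) {α β : ℝ}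
    (hαβ : α ≤ β) (hβα : β ≤ α + 2 * π) : ‖F β - F α‖ ≤ alexNormPrim F := by
  refine le_csSup ⟨M + M, ?_⟩ ⟨α, β, hαβ, hβα, rfl⟩
  rintro r ⟨α', β', -, -, rfl⟩
  exact (norm_sub_le _ _).trans (add_le_add (hM β') (hM α'))

/-- There is no lower bound for `f ↦ f̂` from `A_c(𝕋)` into the
space `d` of `o(n)` sequences: for every `δ > 0` there is a nonzero
`F ∈ B_c(𝕋)` with `‖f̂‖_d < δ ‖f‖_𝕋`. -/
theorem fourier_map_no_lower_bound :
    ∀ δ > (0 : ℝ), ∃ F : ℝ → ℂ,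
      (Continuous F ∧ F (-π) = 0 ∧ ∀ x : ℝ, F (x + 2 * π) = F x + F π)
      ∧ (∃ x : ℝ, F x ≠ 0)
      ∧ (⨆ n : ℤ, ‖fourierCoefPrim F n‖ / (|(n : ℝ)| + 1))
          < δ * alexNormPrim F := by
  intro δ hδ
  obtain ⟨K, hK⟩ := exists_nat_gt (π / δ)
  have hKpos : 0 < K := by exact_mod_cast (div_pos pi_pos hδ).trans hK
  set s := (Finset.range K).map ⟨fun j => 4 * j + 1, fun a b h => by simp_all⟩
  have hcard : s.card = K := by simp [s]
  have hmod : ∀ N ∈ s, N % 4 = 1 := by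
    simp only [s, Finset.mem_map]
    rintro _ ⟨j, -, rfl⟩
    show (4 * j + 1) % 4 = 1
    omega
  have hs : s.Nonempty := Finset.card_pos.mp (hcard ▸ hKpos)
  have hπ : sinAverage s π = 0 := by simpa using sinAverage_int_mul_pi s 1
  have hnegπ : sinAverage s (-π) = 0 := by simpa using sinAverage_int_mul_pi s (-1)
  have hone := sinAverage_pi_div_two s hs hmod
  refine ⟨fun x => sinAverage s x, ⟨by fun_prop, by simp [hnegπ], fun x => ?_⟩,
    ⟨π / 2, by simp [hone]⟩, ?_⟩
  · simp [sinAverage_periodic s x, hπ]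
  calc (⨆ n : ℤ, ‖fourierCoefPrim (fun x => (sinAverage s x : ℂ)) n‖ / (|(n : ℝ)| + 1))
      ≤ π / K :=
        hcard ▸ iSup_div_abs_add_one_le (by positivity) (norm_fourierCoefPrim_sinAverage_le s)
    _ < δ := (div_lt_comm₀ hδ (by positivity)).mp hK
    _ = δ * ‖(sinAverage s (π / 2) : ℂ) - sinAverage s (-π)‖ := by simp [hnegπ, hone]
    _ ≤ δ * alexNormPrim fun x => (sinAverage s x : ℂ) := by
      gcongr
      exact norm_sub_le_alexNormPrim (F := fun x => (sinAverage s x : ℂ)) (M := 1)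
        (fun x => by simpa using abs_sinAverage_le_one s x)
        (by linarith [pi_pos]) (by linarith [pi_pos])
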